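/- Let G be a connected graph, S ⊆ V(G) a set of vertices, and A ⊆ Ω_E(G) a set of edge-ends. Suppose F ⊆ E(G) is a finite edge set of minimum cardinality such that there is no S–A path in G − F. Then F also separates S from the closure Ā of A in Ω_E(G): there is no S–Ā path in G − F. -/
import Mathlib


/-!
Formalization of definitions and a statement from
"Edge-connectivity and edge-ends in infinite graphs" (arXiv:2404.17106).
-/

universe u

namespace EdgeEndPaper

variable {V : Type u}

/-- A ray in `G`: a one-way infinite path `v₀v₁v₂…`. -/
structure Ray (G : SimpleGraph V) : Type u where
  f : ℕ → V
  inj : Function.Injective f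
  adj : ∀ n : ℕ, G.Adj (f n) (f (n + 1))

/-- A double ray in `G`: a two-way infinite path. -/
structure DoubleRay (G : SimpleGraph V) : Type u where
  f : ℤ → V
  inj : Function.Injective f
  adj : ∀ n : ℤ, G.Adj (f n) (f (n + 1))

variable (G : SimpleGraph V)

/-- The tails of the rays `r` and `s` lie in the same connected component of `G - F`
(deletion of the edges in `F`). -/
def SameComp (F : Set (Sym2 V)) (r s : Ray G) : Prop :=
  ∃ N : ℕ, ∀ m n : ℕ, N ≤ m → N ≤ n → (G.deleteEdges F).Reachable (r.f m) (s.f n)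

/-- Edge-equivalence of rays: no finite edge set separates the tails of `r` and `s`. -/
def EdgeEquiv (r s : Ray G) : Prop :=
  ∀ F : Set (Sym2 V), F.Finite → SameComp G F r s

/-- The edge-end space `Ω_E(G)`. -/
def EdgeEnd : Type u := Quot (EdgeEquiv G)

/-- The edge-end `[r]_E` of a ray `r`. -/
def Ray.edgeEnd {G : SimpleGraph V} (r : Ray G) : EdgeEnd G := Quot.mk _ r

/-- `C_E(F, ω)` : the vertices of the connected component of `G - F` in which `ω` has a tail. -/
def CE (F : Set (Sym2 V)) (ω : EdgeEnd G) : Set V :=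
  {v | ∃ r : Ray G, r.edgeEnd = ω ∧ ∃ N : ℕ, ∀ n : ℕ, N ≤ n →
    (G.deleteEdges F).Reachable (r.f n) v}

/-- `Ω_E(F, ω)` : the edge-ends whose rays have tails in the same component of `G - F`
as the rays of `ω`. -/
def OmegaE (F : Set (Sym2 V)) (ω : EdgeEnd G) : Set (EdgeEnd G) :=
  {η | ∃ r s : Ray G, r.edgeEnd = ω ∧ s.edgeEnd = η ∧ SameComp G F r s}

/-- The topology on `Ω_E(G)`, with the sets `Ω_E(F, ω)` (for finite `F ⊆ E(G)`) as a basis. -/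
def edgeEndTopology : TopologicalSpace (EdgeEnd G) :=
  .generateFrom {U | ∃ (F : Set (Sym2 V)) (ω : EdgeEnd G),
    F.Finite ∧ F ⊆ G.edgeSet ∧ U = OmegaE G F ω}

/-- `Ê(F, ω) = C_E(F, ω) ∪ Ω_E(F, ω)`, inside `Ê(G) = V(G) ⊔ Ω_E(G)`. -/
def EHatBasic (F : Set (Sym2 V)) (ω : EdgeEnd G) : Set (V ⊕ EdgeEnd G) :=
  Sum.inl '' CE G F ω ∪ Sum.inr '' OmegaE G F ω

/-- The topology on `Ê(G) = V(G) ∪ Ω_E(G)`: the vertex singletons together with the sets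
`Ê(F, ω)` (for finite `F ⊆ E(G)`) form a basis. -/
def eHatTopology : TopologicalSpace (V ⊕ EdgeEnd G) :=
  .generateFrom ({U | ∃ v : V, U = {Sum.inl v}} ∪
    {U | ∃ (F : Set (Sym2 V)) (ω : EdgeEnd G),
      F.Finite ∧ F ⊆ G.edgeSet ∧ U = EHatBasic G F ω})

/-- A vertex `v` edge-dominates the edge-end `ω` if `v ∈ C_E(F, ω)` for every finite `F`. -/
def EdgeDominates (v : V) (ω : EdgeEnd G) : Prop :=
  ∀ F : Set (Sym2 V), F.Finite → v ∈ CE G F ω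

/-- The cut `δ(X)`: the edges of `G` with one endpoint in `X` and the other outside of `X`. -/
def cut (X : Set V) : Set (Sym2 V) :=
  {e | e ∈ G.edgeSet ∧ ∃ u v : V, e = s(u, v) ∧ u ∈ X ∧ v ∉ X}

/-- The positive half-ray of a double ray. -/
def DoubleRay.posRay {G : SimpleGraph V} (d : DoubleRay G) : Ray G where
  f n := d.f n
  inj a b h := by exact_mod_cast d.inj h
  adj n := by
    have h := d.adj (n : ℤ)
    rwa [show ((n : ℤ) + 1) = ((n + 1 : ℕ) : ℤ) by push_cast; ring] at h

/-- The negative half-ray of a double ray. -/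
def DoubleRay.negRay {G : SimpleGraph V} (d : DoubleRay G) : Ray G where
  f n := d.f (-n)
  inj a b h := by
    have h2 : -(a : ℤ) = -(b : ℤ) := d.inj h
    exact_mod_cast neg_injective h2
  adj n := by
    have h := (d.adj (-((n : ℤ) + 1))).symm
    rw [show (-((n : ℤ) + 1) + 1) = -(n : ℤ) by ring] at h
    rwa [show (-((n : ℤ) + 1)) = -((n + 1 : ℕ) : ℤ) by push_cast; ring] at h

/-- A generalized path in `G`: a finite path, a ray, or a double ray. -/
inductive GenPath (G : SimpleGraph V) : Type u where
  | finite : (u v : V) → (p : G.Walk u v) → p.IsPath → GenPath G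
  | ray : Ray G → GenPath G
  | doubleRay : DoubleRay G → GenPath G

/-- The edge set of a generalized path. -/
def GenPath.edges {G : SimpleGraph V} : GenPath G → Set (Sym2 V)
  | .finite _ _ p _ => {e | e ∈ p.edges}
  | .ray r => Set.range fun n : ℕ => s(r.f n, r.f (n + 1))
  | .doubleRay d => Set.range fun n : ℤ => s(d.f n, d.f (n + 1))

/-- The vertex set of a generalized path. -/
def GenPath.vertices {G : SimpleGraph V} : GenPath G → Set V
  | .finite _ _ p _ => {v | v ∈ p.support}
  | .ray r => Set.range r.f
  | .doubleRay d => Set.range d.f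

/-- A family of pairwise edge-disjoint generalized paths. -/
def PairwiseEdgeDisjoint (Ps : Set (GenPath G)) : Prop :=
  Ps.Pairwise fun P Q => P.edges ∩ Q.edges = ∅

/-- A graphic `v–ω` path: a ray starting at `v` whose edge-end is `ω`. -/
def IsGraphicVertexEndPath (v : V) (ω : EdgeEnd G) (P : GenPath G) : Prop :=
  ∃ r : Ray G, P = .ray r ∧ r.f 0 = v ∧ r.edgeEnd = ω

/-- A `v–ω` path: a graphic `v–ω` path, or a finite path from `v` to a vertex
edge-dominating `ω`. -/
def IsVertexEndPath (v : V) (ω : EdgeEnd G) (P : GenPath G) : Prop :=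
  IsGraphicVertexEndPath G v ω P ∨
    ∃ u : V, EdgeDominates G u ω ∧
      ∃ (p : G.Walk v u) (hp : p.IsPath), P = .finite v u p hp

/-- A graphic `ω₁–ω₂` path: a double ray one of whose half-rays has edge-end `ω₁` and
the other edge-end `ω₂`. -/
def IsGraphicEndEndPath (ω₁ ω₂ : EdgeEnd G) (P : GenPath G) : Prop :=
  ∃ d : DoubleRay G, P = .doubleRay d ∧
    ((d.posRay.edgeEnd = ω₁ ∧ d.negRay.edgeEnd = ω₂) ∨
     (d.posRay.edgeEnd = ω₂ ∧ d.negRay.edgeEnd = ω₁))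

/-- An `ω₁–ω₂` path: a graphic `ω₁–ω₂` path, or a `v–ωᵢ` path for some vertex `v`
edge-dominating the other edge-end. -/
def IsEndEndPath (ω₁ ω₂ : EdgeEnd G) (P : GenPath G) : Prop :=
  IsGraphicEndEndPath G ω₁ ω₂ P ∨
    (∃ v : V, EdgeDominates G v ω₂ ∧ IsVertexEndPath G v ω₁ P) ∨
    (∃ v : V, EdgeDominates G v ω₁ ∧ IsVertexEndPath G v ω₂ P)

/-- `P` is a `t₁–t₂` path, for points `t₁, t₂ ∈ Ê(G) = V(G) ⊔ Ω_E(G)`. -/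
def Connects : V ⊕ EdgeEnd G → V ⊕ EdgeEnd G → GenPath G → Prop := fun a b P =>
  match a, b with
  | Sum.inl u, Sum.inl v => ∃ (p : G.Walk u v) (hp : p.IsPath), P = .finite u v p hp
  | Sum.inl v, Sum.inr ω => IsVertexEndPath G v ω P
  | Sum.inr ω, Sum.inl v => IsVertexEndPath G v ω P
  | Sum.inr ω₁, Sum.inr ω₂ => IsEndEndPath G ω₁ ω₂ P

/-- An `S–A` path for a vertex set `S` and a set of edge-ends `A`. -/
def IsSAPath (S : Set V) (A : Set (EdgeEnd G)) (P : GenPath G) : Prop :=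
  ∃ v ∈ S, ∃ ω ∈ A, IsVertexEndPath G v ω P

section Helpers

variable {G : SimpleGraph V}

private lemma chain_reachable {H : SimpleGraph V} {f : ℕ → V}
    (hadj : ∀ n, H.Adj (f n) (f (n + 1))) (m n : ℕ) : H.Reachable (f m) (f n) := by
  have key : ∀ d k, H.Reachable (f k) (f (k + d)) := by
    intro d
    induction d with
    | zero => intro k; exact SimpleGraph.Reachable.refl _
    | succ d ih => intro k; exact (ih k).trans (hadj (k + d)).reachable
  rcases le_total m n with h | h
  · have := key (n - m) m; rwa [show m + (n - m) = n by omega] at this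
  · have := key (m - n) n; rw [show n + (m - n) = m by omega] at this; exact this.symm

private lemma tail_avoid (s : Ray G) {F : Set (Sym2 V)} (hF : F.Finite) :
    ∃ N : ℕ, ∀ n, N ≤ n → s(s.f n, s.f (n + 1)) ∉ F := by
  have hinj : Function.Injective (fun n : ℕ => s(s.f n, s.f (n + 1))) := by
    intro a b hab
    simp only [Sym2.eq, Sym2.rel_iff', Prod.mk.injEq, Prod.swap_prod_mk] at hab
    rcases hab with ⟨h1, _⟩ | ⟨h1, h2⟩
    · exact s.inj h1
    · have ha := s.inj h1; have hb := s.inj h2; omega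
  have hfin : {n : ℕ | s(s.f n, s.f (n + 1)) ∈ F}.Finite := hF.preimage hinj.injOn
  obtain ⟨N, hN⟩ := hfin.bddAbove
  exact ⟨N + 1, fun n hn hmem => by have := hN hmem; omega⟩

private lemma tail_reachable (s : Ray G) {F : Set (Sym2 V)} (hF : F.Finite) :
    ∃ N, ∀ m n, N ≤ m → N ≤ n → (G.deleteEdges F).Reachable (s.f m) (s.f n) := by
  obtain ⟨N, hN⟩ := tail_avoid s hF
  refine ⟨N, ?_⟩
  have key : ∀ d k, N ≤ k → (G.deleteEdges F).Reachable (s.f k) (s.f (k + d)) := by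
    intro d
    induction d with
    | zero => intro k _; exact SimpleGraph.Reachable.refl _
    | succ d ih =>
      intro k hk
      refine (ih k hk).trans (SimpleGraph.Adj.reachable ?_)
      rw [SimpleGraph.deleteEdges_adj]
      exact ⟨s.adj (k + d), hN (k + d) (by omega)⟩
  intro m n hm hn
  rcases le_total m n with h | h
  · have := key (n - m) m hm; rwa [show m + (n - m) = n by omega] at this
  · have := key (m - n) n hn; rw [show n + (m - n) = m by omega] at this; exact this.symm

private lemma sameComp_refl {F : Set (Sym2 V)} (hF : F.Finite) (r : Ray G) :
    SameComp G F r r := tail_reachable r hF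

private lemma sameComp_symm {F : Set (Sym2 V)} {r s : Ray G} (h : SameComp G F r s) :
    SameComp G F s r := by
  obtain ⟨N, hN⟩ := h
  exact ⟨N, fun m n hm hn => (hN n m hn hm).symm⟩

private lemma sameComp_trans {F : Set (Sym2 V)} {r s t : Ray G}
    (h1 : SameComp G F r s) (h2 : SameComp G F s t) : SameComp G F r t := by
  obtain ⟨N1, hN1⟩ := h1
  obtain ⟨N2, hN2⟩ := h2
  refine ⟨max N1 N2, fun m n hm hn => ?_⟩
  exact (hN1 m (max N1 N2) (le_trans (le_max_left _ _) hm) (le_max_left _ _)).trans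
    (hN2 (max N1 N2) n (le_max_right _ _) (le_trans (le_max_right _ _) hn))

private lemma edgeEquiv_equivalence : Equivalence (EdgeEquiv G) where
  refl r := fun F hF => sameComp_refl hF r
  symm h := fun F hF => sameComp_symm (h F hF)
  trans h1 h2 := fun F hF => sameComp_trans (h1 F hF) (h2 F hF)

private lemma edgeEquiv_of_eq {r s : Ray G} (h : r.edgeEnd = s.edgeEnd) :
    EdgeEquiv G r s :=
  edgeEquiv_equivalence.eqvGen_iff.mp (Quot.eq.mp h)

private lemma ray_extend {H : SimpleGraph V} (s : Ray H) {v w : V} (p : H.Walk v w)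
    (hw : ∃ k, w = s.f k) :
    ∃ (r : Ray H) (K j : ℕ), r.f 0 = v ∧ ∀ n, r.f (K + n) = s.f (j + n) := by
  classical
  induction p with
  | nil =>
    obtain ⟨k, hk⟩ := hw
    refine ⟨⟨fun n => s.f (k + n), fun a b h => by have := s.inj h; omega,
      fun n => s.adj (k + n)⟩, 0, k, ?_, fun n => ?_⟩
    · simpa using hk.symm
    · show s.f (k + (0 + n)) = s.f (k + n)
      rw [Nat.zero_add]
  | @cons a b c hab q ih =>
    obtain ⟨r, K, j, h0, htail⟩ := ih hw
    by_cases hv : ∃ i, r.f i = a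
    · obtain ⟨i, hi⟩ := hv
      refine ⟨⟨fun n => r.f (i + n), fun x y h => by have := r.inj h; omega,
        fun n => r.adj (i + n)⟩, K, j + i,
        by simpa using hi, ?_⟩
      intro n
      show r.f (i + (K + n)) = s.f (j + i + n)
      have h1 := htail (i + n)
      rw [show i + (K + n) = K + (i + n) by omega, h1, show j + (i + n) = j + i + n by omega]
    · refine ⟨⟨fun n => match n with | 0 => a | (m + 1) => r.f m, ?_, ?_⟩, K + 1, j, rfl, ?_⟩
      · intro x y h
        cases x with
        | zero =>
          cases y with
          | zero => rfl
          | succ m => exact absurd ⟨m, (h : a = r.f m).symm⟩ hv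
        | succ m =>
          cases y with
          | zero => exact absurd ⟨m, (h : r.f m = a)⟩ hv
          | succ n => exact congrArg Nat.succ (r.inj (h : r.f m = r.f n))
      · intro n
        cases n with
        | zero => show H.Adj a (r.f 0); rw [h0]; exact hab
        | succ m => exact r.adj m
      · intro n
        rw [show K + 1 + n = (K + n) + 1 by omega]
        show r.f (K + n) = s.f (j + n)
        exact htail n

end Helpers

/-- A finite edge set of minimum cardinality separating `S` from `A` also separates `S`
from the closure of `A` in `Ω_E(G)`. -/
theorem min_separator_separates_closure (hG : G.Connected) (S : Set V) (A : Set (EdgeEnd G))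
    (F : Set (Sym2 V)) (hFfin : F.Finite) (hFE : F ⊆ G.edgeSet)
    (hsep : ¬ ∃ P : GenPath G, IsSAPath G S A P ∧ GenPath.edges P ∩ F = ∅)
    (hmin : ∀ F' : Set (Sym2 V), F'.Finite → F' ⊆ G.edgeSet →
      (¬ ∃ P : GenPath G, IsSAPath G S A P ∧ GenPath.edges P ∩ F' = ∅) →
      F.ncard ≤ F'.ncard) :
    ¬ ∃ P : GenPath G, IsSAPath G S (@closure _ (edgeEndTopology G) A) P ∧
      GenPath.edges P ∩ F = ∅ := by
  classical
  letI : TopologicalSpace (EdgeEnd G) := edgeEndTopology G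
  rintro ⟨P, ⟨v, hvS, ω, hωA, hP⟩, hPF⟩
  obtain ⟨r₀, hr₀⟩ := Quot.exists_rep ω
  have hself : ω ∈ OmegaE G F ω := ⟨r₀, r₀, hr₀, hr₀, sameComp_refl hFfin r₀⟩
  have hopen : IsOpen (OmegaE G F ω) :=
    TopologicalSpace.GenerateOpen.basic _ ⟨F, ω, hFfin, hFE, rfl⟩
  obtain ⟨η, hηΩ, hηA⟩ := mem_closure_iff.mp hωA _ hopen hself
  obtain ⟨r₁, s, hr₁, hs, hcomp⟩ := hηΩ
  obtain ⟨N₀, hN₀⟩ := tail_avoid s hFfin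
  have hreach : ∃ M, N₀ ≤ M ∧ (G.deleteEdges F).Reachable v (s.f M) := by
    rcases hP with ⟨t, hPt, ht0, htω⟩ | ⟨u, hdom, p, hp, hPp⟩
    · have htF : ∀ n, s(t.f n, t.f (n + 1)) ∉ F := by
        intro n hn
        have hmem : s(t.f n, t.f (n + 1)) ∈ GenPath.edges P ∩ F :=
          ⟨by rw [hPt]; exact ⟨n, rfl⟩, hn⟩
        rw [hPF] at hmem
        exact hmem
      have htadj : ∀ n, (G.deleteEdges F).Adj (t.f n) (t.f (n + 1)) := fun n =>
        SimpleGraph.deleteEdges_adj.mpr ⟨t.adj n, htF n⟩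
      have hequiv : SameComp G F t s :=
        sameComp_trans ((edgeEquiv_of_eq (htω.trans hr₁.symm)) F hFfin) hcomp
      obtain ⟨N, hN⟩ := hequiv
      refine ⟨max N N₀, le_max_right _ _, ?_⟩
      have h1 : (G.deleteEdges F).Reachable (t.f 0) (t.f N) := chain_reachable htadj 0 N
      rw [ht0] at h1
      exact h1.trans (hN N (max N N₀) le_rfl (le_max_left _ _))
    · obtain ⟨r₂, hr₂ω, N₂, hreach₂⟩ := hdom F hFfin
      have hequiv : SameComp G F r₂ s :=
        sameComp_trans ((edgeEquiv_of_eq (hr₂ω.trans hr₁.symm)) F hFfin) hcomp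
      obtain ⟨N₃, hN₃⟩ := hequiv
      have hpF : ∀ e ∈ p.edges, e ∈ (G.deleteEdges F).edgeSet := by
        intro e he
        rw [SimpleGraph.edgeSet_deleteEdges]
        refine ⟨p.edges_subset_edgeSet he, fun hf => ?_⟩
        have hmem : e ∈ GenPath.edges P ∩ F := ⟨by rw [hPp]; exact he, hf⟩
        rw [hPF] at hmem
        exact hmem
      have hvu : (G.deleteEdges F).Reachable v u := ⟨p.transfer _ hpF⟩
      refine ⟨max (max N₂ N₃) N₀, le_max_right _ _, ?_⟩
      have h1 : (G.deleteEdges F).Reachable (r₂.f (max N₂ N₃)) u :=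
        hreach₂ _ (le_max_left _ _)
      have h2 : (G.deleteEdges F).Reachable (r₂.f (max N₂ N₃)) (s.f (max (max N₂ N₃) N₀)) :=
        hN₃ _ _ (le_max_right _ _) (le_trans (le_max_right _ _) (le_max_left _ _))
      exact hvu.trans (h1.symm.trans h2)
  obtain ⟨M, hMN₀, hvM⟩ := hreach
  let s' : Ray (G.deleteEdges F) :=
    ⟨fun n => s.f (M + n), fun a b h => by have := s.inj h; omega,
      fun n => SimpleGraph.deleteEdges_adj.mpr ⟨s.adj (M + n), hN₀ (M + n) (by omega)⟩⟩
  obtain ⟨W⟩ := hvM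
  obtain ⟨r, K, j, hr0, hrt⟩ := ray_extend s' W ⟨0, rfl⟩
  have hradj : ∀ n, G.Adj (r.f n) (r.f (n + 1)) ∧ s(r.f n, r.f (n + 1)) ∉ F := fun n =>
    SimpleGraph.deleteEdges_adj.mp (r.adj n)
  let rG : Ray G := ⟨r.f, r.inj, fun n => (hradj n).1⟩
  have hrη : rG.edgeEnd = η := by
    rw [← hs]
    apply Quot.sound
    intro F' hF'
    obtain ⟨N', hN'⟩ := tail_reachable s hF'
    refine ⟨K + N', fun m n hm hn => ?_⟩
    have h1 := hrt (m - K)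
    rw [show K + (m - K) = m by omega] at h1
    have h2 : rG.f m = s.f (M + (j + (m - K))) := h1
    rw [h2]
    exact hN' _ _ (by omega) (by omega)
  refine hsep ⟨GenPath.ray rG, ⟨v, hvS, η, hηA, Or.inl ⟨rG, rfl, hr0, hrη⟩⟩, ?_⟩
  apply Set.eq_empty_iff_forall_notMem.mpr
  rintro e ⟨⟨n, rfl⟩, heF⟩
  exact (hradj n).2 heF


end EdgeEndPaper
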